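/- Let a = (a₁,…,a_d) and b = (b₁,…,b_d) be tuples of permutations of Z/nZ such that a_j(i) = i + 1 (mod n) and b_j(i) = i + 1 (mod n) for some fixed index j. For each i ∈ Z/nZ define the label Δ_i(a) = (a₁(i) − i, a₂(i) − i, …, a_d(i) − i) ∈ (Z/nZ)^d, and let S(a) be the sequence (Δ_0(a), Δ_1(a), …, Δ_{n−1}(a)); define S(b) analogously. Then there exists τ ∈ S_n (acting on Z/nZ) with b_k = τ⁻¹ a_k τ for all k = 1,…,d if and only if S(a) and S(b) are cyclically equivalent sequences. -/

import Mathlib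

/-- for tuples of permutations of `ZMod n` whose `j`-th entries are both the
standard `n`-cycle `i ↦ i + 1`, a simultaneous conjugator exists iff the label sequences
`S(a), S(b)` (with `Δ_i(a) = (a₁ i − i, …, a_d i − i)`) are cyclically equivalent. -/
theorem stmt_10 {n d : ℕ} [NeZero n] (a b : Fin d → Equiv.Perm (ZMod n)) (j : Fin d)
    (haj : ∀ i, a j i = i + 1) (hbj : ∀ i, b j i = i + 1) :
    (∃ τ : Equiv.Perm (ZMod n), ∀ k, b k = τ⁻¹ * a k * τ) ↔
      ∃ r : ZMod n, ∀ i : ZMod n,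
        (fun k : Fin d => b k i - i) = (fun k : Fin d => a k (i + r) - (i + r)) := by
  constructor
  · rintro ⟨τ, hτ⟩
    -- τ commutes with the shift, hence τ i = i + τ 0
    have hstep : ∀ i : ZMod n, τ (i + 1) = τ i + 1 := by
      intro i
      have h := congrArg (fun p : Equiv.Perm (ZMod n) => τ (p i)) (hτ j)
      simp only [Equiv.Perm.mul_apply, Equiv.apply_symm_apply] at h
      have : τ (b j i) = a j (τ i) := by
        simpa [Equiv.Perm.mul_apply] using h
      rw [hbj, haj] at this
      exact this
    have key : ∀ i : ZMod n, τ i = i + τ 0 := by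
      have hnat : ∀ m : ℕ, τ (m : ZMod n) = (m : ZMod n) + τ 0 := by
        intro m
        induction m with
        | zero => simp
        | succ m ih =>
          push_cast
          rw [hstep, ih]
          ring
      intro i
      obtain ⟨m, rfl⟩ := ZMod.natCast_zmod_surjective (n := n) i
      exact hnat m
    refine ⟨τ 0, fun i => funext fun k => ?_⟩
    have hb : b k i = τ.symm (a k (τ i)) := by
      rw [hτ k]; rfl
    have hsymm : ∀ y : ZMod n, τ.symm y = y - τ 0 := by
      intro y
      apply τ.injective
      rw [Equiv.apply_symm_apply, key]
      ring
    rw [hb, hsymm, key]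
    ring
  · rintro ⟨r, hr⟩
    refine ⟨Equiv.addRight r, fun k => ?_⟩
    ext i
    have h := congrFun (hr i) k
    have : b k i = a k (i + r) - r := by
      have : b k i - i = a k (i + r) - (i + r) := h
      linear_combination this
    show b k i = (Equiv.addRight r).symm (a k (i + r))
    rw [this]
    simp [Equiv.addRight]
    ring
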